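/- arXiv:2010.09580 — 2 statements merged into one kernel-verified Lean document; each statement's English description precedes it below -/
import Mathlib

section
/- Let 𝒫 = {(n_i), (H_i), (I_i), (u_i)}_{i∈[k]} be a partial clustering and let x ∈ R be such that Dom(x) ⊆ I_i for every i ∈ [k]. Let j ∈ [k] be an index such that f_2(x, u_j) is minimal among the values f_2(x, u_i), i ∈ [k]. Then the tuple obtained from 𝒫 by replacing H_j with H_j ∪ {x} is again a partial clustering, and its value OPT equals OPT(𝒫). -/
open Finset

namespace KMD

/-- A point in `ℍ^d`: each coordinate is either a real number or missing (`none`). -/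
abbrev HPt (d : ℕ) := Fin d → Option ℝ

variable {d : ℕ}

/-- The domain of a point: the set of coordinates where it is specified. -/
noncomputable def Dom (x : HPt d) : Finset (Fin d) := Finset.univ.filter fun i => x i ≠ none

/-- The number of missing coordinates of a point. -/
noncomputable def numMissing (x : HPt d) : ℕ := (Finset.univ.filter fun i => x i = none).card

/-- A `Δ`-point: at most `Δ` coordinates are missing. -/
def IsDeltaPt (Δ : ℕ) (x : HPt d) : Prop := numMissing x ≤ Δ

/-- `(a - b)^2`, with the convention that it is `0` when either entry is missing. -/
def coordSq : Option ℝ → Option ℝ → ℝ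
  | some a, some b => (a - b) ^ 2
  | _, _ => 0

/-- `d^I(x,y)`. -/
noncomputable def dI (I : Finset (Fin d)) (x y : HPt d) : ℝ :=
  Real.sqrt (∑ i ∈ I, coordSq (x i) (y i))

/-- `d(x,y) = d^{[d]}(x,y)`. -/
noncomputable def dH (x y : HPt d) : ℝ := dI Finset.univ x y

/-- `PD(S, I)`: points of `S` partially defined on `I`. -/
noncomputable def PD (S : Finset (HPt d)) (I : Finset (Fin d)) : Finset (HPt d) :=
  S.filter fun x => (Dom x ∩ I).Nonempty

/-- `FD(S, I)`: points of `S` fully defined on `I`. -/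
noncomputable def FD (S : Finset (HPt d)) (I : Finset (Fin d)) : Finset (HPt d) :=
  S.filter fun x => Dom x ⊆ I

/-- The mean `c^I(P)` of `P` on the coordinates of `I` (unspecified outside `I`). -/
noncomputable def cI (I : Finset (Fin d)) (P : Finset (HPt d)) : HPt d := fun i =>
  if i ∈ I ∧ (PD P {i}).Nonempty then
    some ((∑ x ∈ PD P {i}, (x i).getD 0) / (PD P {i}).card)
  else none

/-- `c(P) = c^{[d]}(P)`. -/
noncomputable def cP (P : Finset (HPt d)) : HPt d := cI Finset.univ P

/-- `f^I_2(X, y) = Σ_{x ∈ X} d^I(x,y)^2`. -/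
noncomputable def f2I (I : Finset (Fin d)) (X : Finset (HPt d)) (y : HPt d) : ℝ :=
  ∑ x ∈ X, dI I x y ^ 2

/-- `f_2 = f^{[d]}_2`. -/
noncomputable def f2 (X : Finset (HPt d)) (y : HPt d) : ℝ := f2I Finset.univ X y

/-- A partial clustering of the instance `P` of `Δ`-points, with `k` clusters. -/
structure PartialClustering (d Δ k : ℕ) (P : Finset (HPt d)) where
  n : Fin k → ℕ
  H : Fin k → Finset (HPt d)
  I : Fin k → Finset (Fin d)
  u : Fin k → HPt d
  H_sub : ∀ i, H i ⊆ P
  n_le : ∀ i, n i ≤ Δ + 1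
  dom_u : ∀ i, Dom (u i) = I i
  I_card : ∀ i, 0 < n i → d - Δ + (n i - 1) ≤ (I i).card
  I_empty : ∀ i, n i = 0 → I i = ∅
  H_empty : ∀ i, n i = 0 → H i = ∅

variable {Δ k : ℕ} {P : Finset (HPt d)}

/-- `R = P − ∪_i H_i`: the points not yet assigned to a cluster. -/
noncomputable def Rset (pc : PartialClustering d Δ k P) : Finset (HPt d) :=
  P \ Finset.univ.biUnion pc.H

/-- An extension of a partial clustering: a partition `(Q i)` of `P` with `H i ⊆ Q i`. -/
def IsExtension (pc : PartialClustering d Δ k P) (Q : Fin k → Finset (HPt d)) : Prop :=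
  (∀ i, pc.H i ⊆ Q i) ∧ (∀ i, Q i ⊆ P) ∧
    (∀ i j, i ≠ j → Disjoint (Q i) (Q j)) ∧ ∀ x ∈ P, ∃ i, x ∈ Q i

/-- The centers associated with an extension: `c'_i` agrees with `u i` on `I i`
and with the mean of `Q i` outside `I i`. -/
noncomputable def centers (pc : PartialClustering d Δ k P)
    (Q : Fin k → Finset (HPt d)) (i : Fin k) : HPt d :=
  fun r => if r ∈ pc.I i then pc.u i r else cP (Q i) r

/-- The value of an extension. -/
noncomputable def extVal (pc : PartialClustering d Δ k P)
    (Q : Fin k → Finset (HPt d)) : ℝ :=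
  ∑ i, f2 (Q i) (centers pc Q i)

/-- `OPT(pc)`: the minimum value over all extensions of `pc`. -/
noncomputable def OPT (pc : PartialClustering d Δ k P) : ℝ :=
  sInf (extVal pc '' {Q | IsExtension pc Q})

/-- An optimal extension. -/
def IsOptimalExtension (pc : PartialClustering d Δ k P)
    (Q : Fin k → Finset (HPt d)) : Prop :=
  IsExtension pc Q ∧ ∀ Q', IsExtension pc Q' → extVal pc Q ≤ extVal pc Q'

/-- A safe extension. -/
def IsSafe (pc : PartialClustering d Δ k P) (Q : Fin k → Finset (HPt d)) : Prop :=
  ∀ x ∈ Rset pc, ∀ i j : Fin k, Dom x ⊆ pc.I i → Dom x ⊆ pc.I j → x ∈ Q i →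
    dH x (centers pc Q i) ≤ dH x (centers pc Q j)

/-- `Z` is a `t`-useless set of coordinates for the pair `(i,j)` and extension `Q`.
For pairs with `I i = ∅` or `I j ≠ ∅` it is by definition the empty set. -/
def IsUseless (pc : PartialClustering d Δ k P) (Q : Fin k → Finset (HPt d))
    (t : ℝ) (i j : Fin k) (Z : Finset (Fin d)) : Prop :=
  Z ⊆ pc.I i ∧
  (((pc.I i).Nonempty ∧ pc.I j = ∅) →
    (Z = ∅ ∨ d - Δ ≤ Z.card) ∧
    f2I Z (Q j ∩ Rset pc) (pc.u i) - f2I Z (Q j ∩ Rset pc) (centers pc Q j)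
      ≤ t * OPT pc) ∧
  (¬ ((pc.I i).Nonempty ∧ pc.I j = ∅) → Z = ∅)

/-- `Z` is compatible with the extension `Q` (for the pair `(i,j)`). -/
def Compatible (pc : PartialClustering d Δ k P) (Q : Fin k → Finset (HPt d))
    (i j : Fin k) (Z : Finset (Fin d)) : Prop :=
  (∀ x ∈ Q j, ¬ Dom x ⊆ pc.I j → ¬ Dom x ⊆ Z) ∧
  (∀ x ∈ Q j, Dom x ⊆ pc.I i → ¬ dH x (pc.u i) < dH x (centers pc Q j) / 2)

open scoped Classical in
/-- The elements of `FD(S, I)` at distance at most `ρ` from `u`. -/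
noncomputable def ballFD (S : Finset (HPt d)) (I : Finset (Fin d))
    (u : HPt d) (ρ : ℝ) : Finset (HPt d) :=
  (FD S I).filter fun x => dH x u ≤ ρ

/-!
Since `Dom x` lies in every `I i`, the center of cluster `i` reads the coordinates of `x` only
inside `I i`, where it is pinned to `u i`. Moving `x` from its cluster `i₀` to cluster `j`
therefore leaves every center unchanged and changes the value by `f₂(x, u j) - f₂(x, u i₀) ≤ 0`.
So every extension is dominated by one with `x` in cluster `j`, and those are exactly the
extensions of the enlarged partial clustering.
-/

theorem csInf_image_eq_of_forall_exists_le {α β : Type*} [ConditionallyCompleteLattice β]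
    {f : α → β} {S T : Set α} (hTS : T ⊆ S) (hS : BddBelow (f '' S))
    (hT : ∀ a ∈ S, ∃ b ∈ T, f b ≤ f a) : sInf (f '' T) = sInf (f '' S) := by
  rcases S.eq_empty_or_nonempty with rfl | ⟨a, ha⟩
  · rw [Set.subset_empty_iff.mp hTS]
  obtain ⟨b, hb, -⟩ := hT a ha
  refine le_antisymm (le_csInf ⟨f a, a, ha, rfl⟩ ?_)
    (csInf_le_csInf hS ⟨f b, b, hb, rfl⟩ (Set.image_mono hTS))
  rintro _ ⟨a', ha', rfl⟩
  obtain ⟨b', hb', hle⟩ := hT a' ha'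
  exact (csInf_le (hS.mono (Set.image_mono hTS)) ⟨b', hb', rfl⟩).trans hle

section Move

variable {ι α : Type*} [DecidableEq ι] [DecidableEq α]

def moveTo (Q : ι → Finset α) (x : α) (j : ι) : ι → Finset α :=
  Function.update (fun i => (Q i).erase x) j (insert x (Q j))

theorem mem_moveTo {Q : ι → Finset α} {x y : α} {i j : ι} :
    y ∈ moveTo Q x j i ↔ (y = x ∧ i = j) ∨ (y ≠ x ∧ y ∈ Q i) := by
  unfold moveTo
  rcases eq_or_ne i j with rfl | hij
  · rw [Function.update_self, mem_insert]
    tauto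
  · rw [Function.update_of_ne hij, mem_erase]
    tauto

theorem erase_moveTo (Q : ι → Finset α) (x : α) (i j : ι) :
    (moveTo Q x j i).erase x = (Q i).erase x := by
  unfold moveTo
  rcases eq_or_ne i j with rfl | hij
  · rw [Function.update_self, erase_insert_eq_erase]
  · rw [Function.update_of_ne hij, erase_idem]

end Move

theorem coordSq_none_left (b : Option ℝ) : coordSq none b = 0 := by
  cases b <;> rfl

theorem f2_singleton_congr {x y z : HPt d} (h : ∀ r ∈ Dom x, y r = z r) :
    f2 {x} y = f2 {x} z := by
  have hcoord : ∀ r, coordSq (x r) (y r) = coordSq (x r) (z r) := by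
    intro r
    by_cases hr : r ∈ Dom x
    · rw [h r hr]
    · rw [Dom, mem_filter, not_and, not_not] at hr
      rw [hr (mem_univ r), coordSq_none_left, coordSq_none_left]
  simp only [f2, f2I, dI, sum_singleton, hcoord]

theorem f2_eq_f2_erase_add (S : Finset (HPt d)) (x y : HPt d) :
    f2 S y = f2 (S.erase x) y + if x ∈ S then f2 {x} y else 0 := by
  split_ifs with hx
  · simp only [f2, f2I, sum_singleton]
    exact (sum_erase_add S _ hx).symm
  · rw [erase_eq_of_notMem hx, add_zero]

theorem extVal_nonneg (pc : PartialClustering d Δ k P) (Q : Fin k → Finset (HPt d)) :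
    0 ≤ extVal pc Q :=
  sum_nonneg fun _ _ => sum_nonneg fun _ _ => sq_nonneg _

theorem mem_Rset {pc : PartialClustering d Δ k P} {x : HPt d} :
    x ∈ Rset pc ↔ x ∈ P ∧ ∀ i, x ∉ pc.H i := by
  simp [Rset]

theorem PD_eq_of_erase_eq {S T : Finset (HPt d)} {x : HPt d} {r : Fin d} (hr : r ∉ Dom x)
    (h : S.erase x = T.erase x) : PD S {r} = PD T {r} := by
  ext y
  simp only [PD, mem_filter]
  rcases eq_or_ne y x with rfl | hy
  · simp [inter_singleton_of_notMem hr]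
  · have hST : y ∈ S ↔ y ∈ T := by simpa [hy] using congrArg (y ∈ ·) h
    rw [hST]

theorem centers_moveTo (pc : PartialClustering d Δ k P) (Q : Fin k → Finset (HPt d))
    {x : HPt d} (hdom : ∀ i, Dom x ⊆ pc.I i) (j : Fin k) :
    centers pc (moveTo Q x j) = centers pc Q := by
  funext i r
  unfold centers
  split_ifs with hr
  · rfl
  · simp only [cP, cI, PD_eq_of_erase_eq (fun h => hr (hdom i h)) (erase_moveTo Q x i j)]

theorem extVal_eq_sum_erase_add (pc : PartialClustering d Δ k P) (Q : Fin k → Finset (HPt d))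
    {x : HPt d} {i₀ : Fin k} (hx : ∀ i, x ∈ Q i ↔ i = i₀) (hdom : Dom x ⊆ pc.I i₀) :
    extVal pc Q = ∑ i, f2 ((Q i).erase x) (centers pc Q i) + f2 {x} (pc.u i₀) := by
  calc extVal pc Q
      = ∑ i, (f2 ((Q i).erase x) (centers pc Q i)
          + if i = i₀ then f2 {x} (centers pc Q i) else 0) :=
        sum_congr rfl fun i _ => by simpa only [hx i] using f2_eq_f2_erase_add (Q i) x _
    _ = _ := by
        rw [sum_add_distrib, sum_ite_eq' univ i₀, if_pos (mem_univ _),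
          f2_singleton_congr (y := centers pc Q i₀) (z := pc.u i₀) fun r hr => if_pos (hdom hr)]

theorem IsExtension.mem_iff_eq {pc : PartialClustering d Δ k P} {Q : Fin k → Finset (HPt d)}
    (hQ : IsExtension pc Q) {x : HPt d} {i₀ : Fin k} (hx : x ∈ Q i₀) (i : Fin k) :
    x ∈ Q i ↔ i = i₀ :=
  ⟨fun h => by_contra fun hne => disjoint_left.mp (hQ.2.2.1 i i₀ hne) h hx, fun h => h ▸ hx⟩

theorem IsExtension.moveTo {pc : PartialClustering d Δ k P} {Q : Fin k → Finset (HPt d)}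
    (hQ : IsExtension pc Q) {x : HPt d} (hxP : x ∈ P) (hxH : ∀ i, x ∉ pc.H i) (j : Fin k) :
    IsExtension pc (moveTo Q x j) := by
  obtain ⟨hHQ, hQP, hdisj, hcover⟩ := hQ
  refine ⟨fun i y hy => ?_, fun i y hy => ?_, fun i i' hii' => ?_, fun y hy => ?_⟩
  · exact mem_moveTo.2 (Or.inr ⟨ne_of_mem_of_not_mem hy (hxH i), hHQ i hy⟩)
  · rcases mem_moveTo.1 hy with ⟨rfl, -⟩ | ⟨-, hy⟩
    exacts [hxP, hQP i hy]
  · refine disjoint_left.2 fun y hy hy' => ?_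
    rcases mem_moveTo.1 hy with ⟨rfl, rfl⟩ | ⟨hyx, hy⟩ <;>
      rcases mem_moveTo.1 hy' with ⟨hyx', rfl⟩ | ⟨hyx', hy'⟩
    exacts [hii' rfl, hyx' rfl, hyx hyx', disjoint_left.1 (hdisj i i' hii') hy hy']
  · by_cases hyx : y = x
    · exact ⟨j, mem_moveTo.2 (Or.inl ⟨hyx, rfl⟩)⟩
    · obtain ⟨i, hi⟩ := hcover y hy
      exact ⟨i, mem_moveTo.2 (Or.inr ⟨hyx, hi⟩)⟩

theorem extVal_moveTo_le {pc : PartialClustering d Δ k P} {Q : Fin k → Finset (HPt d)}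
    (hQ : IsExtension pc Q) {x : HPt d} (hxP : x ∈ P) (hdom : ∀ i, Dom x ⊆ pc.I i) {j : Fin k}
    (hj : ∀ i, f2 {x} (pc.u j) ≤ f2 {x} (pc.u i)) :
    extVal pc (moveTo Q x j) ≤ extVal pc Q := by
  obtain ⟨i₀, hi₀⟩ := hQ.2.2.2 x hxP
  have hx_moveTo (i : Fin k) : x ∈ moveTo Q x j i ↔ i = j := by simp [mem_moveTo]
  rw [extVal_eq_sum_erase_add pc Q (hQ.mem_iff_eq hi₀) (hdom i₀),
    extVal_eq_sum_erase_add pc _ hx_moveTo (hdom j), centers_moveTo pc Q hdom]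
  simp only [erase_moveTo]
  exact (add_le_add_iff_left _).2 (hj i₀)

noncomputable def PartialClustering.addToH (pc : PartialClustering d Δ k P) {x : HPt d} (hxP : x ∈ P)
    (j : Fin k) (hj : pc.n j ≠ 0) : PartialClustering d Δ k P where
  n := pc.n
  H := Function.update pc.H j (insert x (pc.H j))
  I := pc.I
  u := pc.u
  H_sub := (Function.forall_update_iff pc.H fun _ S => S ⊆ P).2
    ⟨insert_subset hxP (pc.H_sub j), fun i _ => pc.H_sub i⟩
  n_le := pc.n_le
  dom_u := pc.dom_u
  I_card := pc.I_card
  I_empty := pc.I_empty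
  H_empty := (Function.forall_update_iff pc.H fun i S => pc.n i = 0 → S = ∅).2
    ⟨fun h => absurd h hj, fun i _ => pc.H_empty i⟩

theorem isExtension_addToH_iff {pc : PartialClustering d Δ k P} {x : HPt d} (hxP : x ∈ P)
    {j : Fin k} (hj : pc.n j ≠ 0) {Q : Fin k → Finset (HPt d)} :
    IsExtension (pc.addToH hxP j hj) Q ↔ IsExtension pc Q ∧ x ∈ Q j := by
  have hH : (∀ i, (pc.addToH hxP j hj).H i ⊆ Q i) ↔ (∀ i, pc.H i ⊆ Q i) ∧ x ∈ Q j := by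
    rw [PartialClustering.addToH, Function.forall_update_iff pc.H fun i S => S ⊆ Q i,
      insert_subset_iff]
    constructor
    · rintro ⟨⟨hx, hHj⟩, hH⟩
      exact ⟨fun i => if h : i = j then h ▸ hHj else hH i h, hx⟩
    · rintro ⟨hH, hx⟩
      exact ⟨⟨hx, hH j⟩, fun i _ => hH i⟩
  unfold IsExtension
  rw [hH]
  tauto

theorem extVal_addToH (pc : PartialClustering d Δ k P) {x : HPt d} (hxP : x ∈ P) (j : Fin k)
    (hj : pc.n j ≠ 0) : extVal (pc.addToH hxP j hj) = extVal pc :=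
  rfl

theorem stmt_3_general {d Δ k : ℕ}
    {P : Finset (HPt d)} (hP : ∀ y ∈ P, IsDeltaPt Δ y ∧ (Dom y).Nonempty)
    (pc : PartialClustering d Δ k P) (x : HPt d) (hxR : x ∈ Rset pc)
    (hdom : ∀ i : Fin k, Dom x ⊆ pc.I i) (j : Fin k)
    (hj : ∀ i : Fin k, f2 {x} (pc.u j) ≤ f2 {x} (pc.u i)) :
    ∃ pc' : PartialClustering d Δ k P,
      pc'.n = pc.n ∧ pc'.I = pc.I ∧ pc'.u = pc.u ∧
      pc'.H = Function.update pc.H j (insert x (pc.H j)) ∧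
      OPT pc' = OPT pc := by
  obtain ⟨hxP, hxH⟩ := mem_Rset.1 hxR
  have hnj : pc.n j ≠ 0 := fun h => by
    obtain ⟨r, hr⟩ := (hP x hxP).2
    simpa [pc.I_empty j h] using hdom j hr
  refine ⟨pc.addToH hxP j hnj, rfl, rfl, rfl, rfl, ?_⟩
  simp only [OPT, extVal_addToH, isExtension_addToH_iff]
  refine csInf_image_eq_of_forall_exists_le (fun Q hQ => hQ.1)
    ⟨0, by rintro _ ⟨Q, -, rfl⟩; exact extVal_nonneg pc Q⟩ fun Q hQ => ?_
  exact ⟨moveTo Q x j, ⟨hQ.moveTo hxP hxH j, mem_moveTo.2 (Or.inl ⟨rfl, rfl⟩)⟩,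
    extVal_moveTo_le hQ hxP hdom hj⟩

/-- Observation 1: assigning a fully decided point of `R` to the cluster
whose partial center is nearest yields a partial clustering with the same value. -/
theorem stmt_3 {d Δ k : ℕ} (hd : 1 ≤ d) (hΔ : Δ < d) (hk : 1 ≤ k)
    {P : Finset (HPt d)} (hP : ∀ y ∈ P, IsDeltaPt Δ y ∧ (Dom y).Nonempty)
    (pc : PartialClustering d Δ k P) (x : HPt d) (hxR : x ∈ Rset pc)
    (hdom : ∀ i : Fin k, Dom x ⊆ pc.I i) (j : Fin k)
    (hj : ∀ i : Fin k, f2 {x} (pc.u j) ≤ f2 {x} (pc.u i)) :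
    ∃ pc' : PartialClustering d Δ k P,
      pc'.n = pc.n ∧ pc'.I = pc.I ∧ pc'.u = pc.u ∧
      pc'.H = Function.update pc.H j (insert x (pc.H j)) ∧
      OPT pc' = OPT pc :=
  stmt_3_general hP pc x hxR hdom j hj

end KMD
end

section
/- Let 𝒫 be a partial clustering, let (P_i)_{i∈[k]} be an optimal extension of 𝒫 with associated centers (c'_i), and let C > 0. Suppose there exist indices i, j ∈ [k] and a set I' ⊆ I_i such that I_j = ∅, |I'| ≥ d − Δ, and f^{I'}_2(P_j, u_i) − f^{I'}_2(P_j, c'_j) ≤ C·f_2(P_i, u_i). Then the tuple 𝒫' obtained from 𝒫 by setting I_j := I', u_j := the element of ℍ^d equal to u_i on the coordinates of I' and to ? elsewhere, and n_j := 1 is a partial clustering with OPT(𝒫') ≤ (1 + C)·OPT(𝒫). -/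
open Finset

namespace KMD

variable {d : ℕ}

variable {Δ k : ℕ} {P : Finset (HPt d)}

/-!
Keep the optimal extension `Q` of `𝒫` and evaluate it in `𝒫'`. Only cluster `j` changes its
center, and only on `I'` (since `I_j = ∅`, the old center of `j` is the mean `c(Q j)`
everywhere), so the value grows by exactly `f^{I'}_2(Q_j, u_i) - f^{I'}_2(Q_j, c'_j)`, which is
at most `C · f_2(Q_i, u_i)`. The center `c'_i` agrees with `u_i` wherever `u_i` is defined, so
`f_2(Q_i, u_i) ≤ f_2(Q_i, c'_i) ≤ val(Q) = OPT(𝒫)`.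
-/

@[simp]
lemma mem_Dom {x : HPt d} {r : Fin d} : r ∈ Dom x ↔ x r ≠ none := by
  simp [Dom]

lemma Dom_ite_mem (I : Finset (Fin d)) (x : HPt d) :
    Dom (fun r => if r ∈ I then x r else none) = I ∩ Dom x := by
  ext r
  by_cases hr : r ∈ I <;> simp [hr]

lemma coordSq_nonneg (a b : Option ℝ) : 0 ≤ coordSq a b := by
  cases a <;> cases b <;> simp only [coordSq, le_refl]
  exact sq_nonneg _

lemma coordSq_none_right (a : Option ℝ) : coordSq a none = 0 := by
  cases a <;> rfl

lemma f2I_eq_sum (I : Finset (Fin d)) (X : Finset (HPt d)) (y : HPt d) :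
    f2I I X y = ∑ x ∈ X, ∑ r ∈ I, coordSq (x r) (y r) :=
  sum_congr rfl fun _ _ => Real.sq_sqrt (sum_nonneg fun _ _ => coordSq_nonneg _ _)

lemma f2_nonneg (X : Finset (HPt d)) (y : HPt d) : 0 ≤ f2 X y := by
  rw [f2, f2I_eq_sum]
  exact sum_nonneg fun _ _ => sum_nonneg fun _ _ => coordSq_nonneg _ _

lemma f2I_add_f2I_compl (I : Finset (Fin d)) (X : Finset (HPt d)) (y : HPt d) :
    f2I I X y + f2I Iᶜ X y = f2 X y := by
  simp only [f2, f2I_eq_sum, ← sum_add_distrib, sum_add_sum_compl]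

lemma f2I_congr_right {I : Finset (Fin d)} (X : Finset (HPt d)) {y z : HPt d}
    (h : ∀ r ∈ I, y r = z r) : f2I I X y = f2I I X z := by
  simp only [f2I_eq_sum]
  exact sum_congr rfl fun x _ => sum_congr rfl fun r hr => by rw [h r hr]

lemma f2I_le_of_eqOn_Dom (I : Finset (Fin d)) (X : Finset (HPt d)) {y z : HPt d}
    (h : ∀ r ∈ Dom y, y r = z r) : f2I I X y ≤ f2I I X z := by
  simp only [f2I_eq_sum]
  refine sum_le_sum fun x _ => sum_le_sum fun r _ => ?_
  by_cases hr : r ∈ Dom y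
  · rw [h r hr]
  · rw [not_not.mp (mt mem_Dom.mpr hr), coordSq_none_right]
    exact coordSq_nonneg _ _

namespace PartialClustering

variable (pc : PartialClustering d Δ k P) (Q : Fin k → Finset (HPt d))

lemma extVal_nonneg : 0 ≤ extVal pc Q :=
  sum_nonneg fun _ _ => f2_nonneg _ _

lemma f2_le_extVal (i : Fin k) : f2 (Q i) (centers pc Q i) ≤ extVal pc Q :=
  single_le_sum (fun _ _ => f2_nonneg _ _) (mem_univ i)

lemma f2_u_le_extVal (i : Fin k) : f2 (Q i) (pc.u i) ≤ extVal pc Q :=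
  (f2I_le_of_eqOn_Dom _ _ fun r hr => by
    rw [centers, if_pos (pc.dom_u i ▸ hr)]).trans (pc.f2_le_extVal Q i)

lemma OPT_le_extVal {Q} (hQ : IsExtension pc Q) : OPT pc ≤ extVal pc Q :=
  csInf_le ⟨0, by rintro _ ⟨_, -, rfl⟩; exact pc.extVal_nonneg _⟩ ⟨Q, hQ, rfl⟩

lemma OPT_eq_extVal {Q} (hQ : IsOptimalExtension pc Q) : OPT pc = extVal pc Q :=
  (pc.OPT_le_extVal hQ.1).antisymm <|
    le_csInf ⟨_, Q, hQ.1, rfl⟩ (by rintro _ ⟨Q', hQ', rfl⟩; exact hQ.2 Q' hQ')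

def setCenter (j : Fin k) (I' : Finset (Fin d)) (v : HPt d) (hv : Dom v = I')
    (hI' : d - Δ ≤ I'.card) : PartialClustering d Δ k P where
  n := Function.update pc.n j 1
  H := pc.H
  I := Function.update pc.I j I'
  u := Function.update pc.u j v
  H_sub := pc.H_sub
  n_le l := by
    rcases eq_or_ne l j with rfl | hl
    · simp
    · simpa [hl] using pc.n_le l
  dom_u l := by
    rcases eq_or_ne l j with rfl | hl
    · simpa using hv
    · simpa [hl] using pc.dom_u l
  I_card l := by
    rcases eq_or_ne l j with rfl | hl
    · simpa using hI'
    · simpa [hl] using pc.I_card l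
  I_empty l := by
    rcases eq_or_ne l j with rfl | hl
    · simp
    · simpa [hl] using pc.I_empty l
  H_empty l := by
    rcases eq_or_ne l j with rfl | hl
    · simp
    · simpa [hl] using pc.H_empty l

variable {j : Fin k} {I' : Finset (Fin d)} {v : HPt d} (hv : Dom v = I')
  (hI' : d - Δ ≤ I'.card)

lemma centers_setCenter_of_ne {l : Fin k} (hl : l ≠ j) :
    centers (pc.setCenter j I' v hv hI') Q l = centers pc Q l := by
  funext r
  simp [centers, setCenter, hl]

lemma extVal_setCenter (hIj : pc.I j = ∅) :
    extVal (pc.setCenter j I' v hv hI') Q =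
      extVal pc Q + (f2I I' (Q j) v - f2I I' (Q j) (centers pc Q j)) := by
  set c := centers (pc.setCenter j I' v hv hI') Q j
  have hc_on : ∀ r ∈ I', c r = v r := fun r hr => by
    simp [c, centers, setCenter, hr]
  have hc_off : ∀ r ∈ I'ᶜ, c r = centers pc Q j r := fun r hr => by
    simp [c, centers, setCenter, hIj, mem_compl.mp hr]
  have hj : f2 (Q j) c = f2 (Q j) (centers pc Q j) +
      (f2I I' (Q j) v - f2I I' (Q j) (centers pc Q j)) := by
    rw [← f2I_add_f2I_compl I', ← f2I_add_f2I_compl I' _ (centers pc Q j),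
      f2I_congr_right _ hc_on, f2I_congr_right _ hc_off]
    ring
  have hdiff : extVal (pc.setCenter j I' v hv hI') Q - extVal pc Q =
      f2 (Q j) c - f2 (Q j) (centers pc Q j) := by
    rw [extVal, extVal, ← sum_sub_distrib]
    exact sum_eq_single j
      (fun l _ hl => by rw [pc.centers_setCenter_of_ne Q hv hI' hl, sub_self]) (by simp)
  linarith

end PartialClustering

theorem stmt_7_general {d Δ k : ℕ}
    {P : Finset (HPt d)}
    (pc : PartialClustering d Δ k P)
    (Q : Fin k → Finset (HPt d)) (hQ : IsOptimalExtension pc Q)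
    (C : ℝ) (hC : 0 < C) (i j : Fin k)
    (I' : Finset (Fin d)) (hI'sub : I' ⊆ pc.I i) (hIj : pc.I j = ∅)
    (hI'card : d - Δ ≤ I'.card)
    (hcost : f2I I' (Q j) (pc.u i) - f2I I' (Q j) (centers pc Q j)
      ≤ C * f2 (Q i) (pc.u i)) :
    ∃ pc' : PartialClustering d Δ k P,
      pc'.H = pc.H ∧
      pc'.n = Function.update pc.n j 1 ∧
      pc'.I = Function.update pc.I j I' ∧
      pc'.u = Function.update pc.u j (fun r => if r ∈ I' then pc.u i r else none) ∧
      OPT pc' ≤ (1 + C) * OPT pc := by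
  have hv : Dom (fun r => if r ∈ I' then pc.u i r else none) = I' := by
    rw [Dom_ite_mem, pc.dom_u i, inter_eq_left.mpr hI'sub]
  refine ⟨pc.setCenter j I' _ hv hI'card, rfl, rfl, rfl, rfl, ?_⟩
  have hagree : f2I I' (Q j) (fun r => if r ∈ I' then pc.u i r else none) =
      f2I I' (Q j) (pc.u i) :=
    f2I_congr_right _ fun r hr => if_pos hr
  have hui := mul_le_mul_of_nonneg_left (pc.f2_u_le_extVal Q i) hC.le
  calc OPT (pc.setCenter j I' _ hv hI'card)
      ≤ extVal (pc.setCenter j I' _ hv hI'card) Q :=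
        -- being an extension depends only on the sets `H`, which `setCenter` keeps
        (pc.setCenter j I' _ hv hI'card).OPT_le_extVal hQ.1
    _ = extVal pc Q + (f2I I' (Q j) (pc.u i) - f2I I' (Q j) (centers pc Q j)) := by
      rw [pc.extVal_setCenter Q hv hI'card hIj, hagree]
    _ ≤ (1 + C) * extVal pc Q := by linarith
    _ = (1 + C) * OPT pc := by rw [pc.OPT_eq_extVal hQ]

/-- Lemma 6: transferring `u_i` restricted to `I'` as a new partial
center for cluster `j` yields a partial clustering of value at most `(1+C)·OPT`. -/
theorem stmt_7 {d Δ k : ℕ} (hd : 1 ≤ d) (hΔ : Δ < d) (hk : 1 ≤ k)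
    {P : Finset (HPt d)} (hP : ∀ y ∈ P, IsDeltaPt Δ y ∧ (Dom y).Nonempty)
    (pc : PartialClustering d Δ k P)
    (Q : Fin k → Finset (HPt d)) (hQ : IsOptimalExtension pc Q)
    (C : ℝ) (hC : 0 < C) (i j : Fin k)
    (I' : Finset (Fin d)) (hI'sub : I' ⊆ pc.I i) (hIj : pc.I j = ∅)
    (hI'card : d - Δ ≤ I'.card)
    (hcost : f2I I' (Q j) (pc.u i) - f2I I' (Q j) (centers pc Q j)
      ≤ C * f2 (Q i) (pc.u i)) :
    ∃ pc' : PartialClustering d Δ k P,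
      pc'.H = pc.H ∧
      pc'.n = Function.update pc.n j 1 ∧
      pc'.I = Function.update pc.I j I' ∧
      pc'.u = Function.update pc.u j (fun r => if r ∈ I' then pc.u i r else none) ∧
      OPT pc' ≤ (1 + C) * OPT pc :=
  stmt_7_general pc Q hQ C hC i j I' hI'sub hIj hI'card hcost

end KMD
end
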